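/- With f_{r,s,t}(q) as above, (1 - q^s)·f_{r-1,s,t}(q) = (1 - q^r)·f_{s-1,r,t}(q) for all positive integers r,s and nonnegative integers t. -/
import Mathlib


open Finset

/-- The q-Pochhammer symbol `(q)_m = ∏_{i=1}^m (1 - q^i)` in `ℚ(q)`. -/
noncomputable def qPoch (q : RatFunc ℚ) (m : ℕ) : RatFunc ℚ :=
  ∏ i ∈ range m, (1 - q ^ (i + 1))

/-- `f_{r,s,t}(q)` with `q = X` the generic variable of `ℚ(q)`. -/
noncomputable def fq (r s t : ℕ) : RatFunc ℚ :=
  ∑ j1 ∈ range (r + 1), ∑ j1' ∈ range (s + 1),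
    if j1 + j1' = t then
      (RatFunc.X : RatFunc ℚ) ^ (j1 * (s - j1')) /
        (qPoch RatFunc.X j1 * qPoch RatFunc.X (r - j1) *
          qPoch RatFunc.X j1' * qPoch RatFunc.X (s - j1'))
    else 0

lemma X_pow_ne_one (i : ℕ) (hi : 0 < i) : (RatFunc.X : RatFunc ℚ) ^ i ≠ 1 := by
  intro h
  have h2 : algebraMap (Polynomial ℚ) (RatFunc ℚ) (Polynomial.X ^ i)
      = algebraMap (Polynomial ℚ) (RatFunc ℚ) 1 := by
    rw [map_pow, map_one, RatFunc.algebraMap_X, h]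
  have h3 := RatFunc.algebraMap_injective ℚ h2
  have h4 := congrArg Polynomial.natDegree h3
  simp [Polynomial.natDegree_X_pow] at h4
  omega

lemma one_sub_ne (i : ℕ) : (1 - (RatFunc.X : RatFunc ℚ) ^ (i + 1)) ≠ 0 := by
  rw [sub_ne_zero]
  exact fun h => X_pow_ne_one (i + 1) (Nat.succ_pos i) h.symm

lemma qPoch_ne_zero (m : ℕ) : qPoch RatFunc.X m ≠ 0 :=
  Finset.prod_ne_zero_iff.mpr fun i _ => one_sub_ne i

lemma qPoch_succ (m : ℕ) :
    qPoch RatFunc.X (m + 1) = qPoch RatFunc.X m * (1 - RatFunc.X ^ (m + 1)) :=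
  Finset.prod_range_succ _ m

@[simp] lemma qPoch_zero : qPoch RatFunc.X 0 = 1 := Finset.prod_range_zero _

/-- The Gaussian binomial coefficient `[n, k]_q` in `ℚ(q)`. -/
noncomputable def gauss (n k : ℕ) : RatFunc ℚ :=
  if k ≤ n then qPoch RatFunc.X n / (qPoch RatFunc.X k * qPoch RatFunc.X (n - k)) else 0

@[simp] lemma gauss_zero (n : ℕ) : gauss n 0 = 1 := by
  simp [gauss, qPoch_ne_zero]

@[simp] lemma gauss_of_gt {n k : ℕ} (h : n < k) : gauss n k = 0 := by
  simp [gauss, Nat.not_le.mpr h]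

lemma gauss_self (n : ℕ) : gauss n n = 1 := by
  simp [gauss, qPoch_ne_zero]

/-- q-Pascal rule. -/
lemma gauss_succ_succ (n k : ℕ) :
    gauss (n + 1) (k + 1) = gauss n (k + 1) + RatFunc.X ^ (n - k) * gauss n k := by
  rcases Nat.lt_or_ge n k with h | h
  · simp [gauss_of_gt, h, Nat.lt_succ_of_lt h, Nat.succ_lt_succ h]
  rcases Nat.eq_or_lt_of_le h with rfl | h2
  · simp [gauss_self, gauss_of_gt (Nat.lt_succ_self _)]
  obtain ⟨m, rfl⟩ : ∃ m, n = k + 1 + m := ⟨n - (k + 1), by omega⟩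
  have e1 : k + 1 + m + 1 - (k + 1) = m + 1 := by omega
  have e2 : k + 1 + m - (k + 1) = m := by omega
  have e3 : k + 1 + m - k = m + 1 := by omega
  simp only [gauss, if_pos (by omega : k + 1 ≤ k + 1 + m + 1),
    if_pos (by omega : k + 1 ≤ k + 1 + m), if_pos (by omega : k ≤ k + 1 + m), e1, e2, e3]
  have hq1 : qPoch RatFunc.X (k + 1 + m + 1)
      = qPoch RatFunc.X (k + 1 + m) * (1 - RatFunc.X ^ (k + 1 + m + 1)) := qPoch_succ _
  have hq2 : qPoch RatFunc.X (k + 1)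
      = qPoch RatFunc.X k * (1 - RatFunc.X ^ (k + 1)) := qPoch_succ _
  have hq3 : qPoch RatFunc.X (m + 1)
      = qPoch RatFunc.X m * (1 - RatFunc.X ^ (m + 1)) := qPoch_succ _
  have hx : (RatFunc.X : RatFunc ℚ) ^ (m + 1) * RatFunc.X ^ (k + 1)
      = RatFunc.X ^ (k + 1 + m + 1) := by rw [← pow_add]; ring_nf
  rw [← mul_div_assoc, div_add_div _ _ (mul_ne_zero (qPoch_ne_zero _) (qPoch_ne_zero _))
    (mul_ne_zero (qPoch_ne_zero _) (qPoch_ne_zero _)), div_eq_div_iff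
    (mul_ne_zero (qPoch_ne_zero _) (qPoch_ne_zero _))
    (mul_ne_zero (mul_ne_zero (qPoch_ne_zero _) (qPoch_ne_zero _))
      (mul_ne_zero (qPoch_ne_zero _) (qPoch_ne_zero _))), hq1, hq2, hq3, ← hx]
  ring

noncomputable def pasc (r : ℕ) : ℕ → RatFunc ℚ
  | 0 => 0
  | (j + 1) => RatFunc.X ^ (r - j) * gauss r j

lemma gauss_succ (r j : ℕ) : gauss (r + 1) j = gauss r j + pasc r j := by
  cases j with
  | zero => simp [pasc]
  | succ i => rw [gauss_succ_succ]; rfl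

noncomputable def G (r s t : ℕ) : RatFunc ℚ :=
  ∑ j1 ∈ range (r + 1), ∑ j1' ∈ range (s + 1),
    if j1 + j1' = t then
      RatFunc.X ^ (j1 * (s - j1')) * gauss r j1 * gauss s j1' else 0

/-- q-Vandermonde. -/
lemma G_eq (r s t : ℕ) : G r s t = gauss (r + s) t := by
  induction r generalizing t with
  | zero =>
    unfold G
    rw [sum_range_one]
    simp only [zero_add, zero_mul, pow_zero, gauss_zero, one_mul, mul_one]
    rw [Finset.sum_ite_eq' (range (s + 1)) t (fun j1' => gauss s j1')]
    by_cases h : t ≤ s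
    · rw [if_pos (by simpa using Nat.lt_succ_of_le h)]
    · rw [if_neg (by simpa using fun hh => h (Nat.lt_succ_iff.mp hh)), gauss_of_gt (by omega)]
  | succ r ih =>
    have expand : G (r + 1) s t =
        (∑ j1 ∈ range (r + 2), ∑ j1' ∈ range (s + 1),
          if j1 + j1' = t then
            RatFunc.X ^ (j1 * (s - j1')) * gauss r j1 * gauss s j1' else 0) +
        (∑ j1 ∈ range (r + 2), ∑ j1' ∈ range (s + 1),
          if j1 + j1' = t then
            RatFunc.X ^ (j1 * (s - j1')) * pasc r j1 * gauss s j1' else 0) := by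
      unfold G
      rw [← Finset.sum_add_distrib]
      refine Finset.sum_congr rfl fun j1 _ => ?_
      rw [← Finset.sum_add_distrib]
      refine Finset.sum_congr rfl fun j1' _ => ?_
      rw [gauss_succ]
      split_ifs with h
      · ring
      · simp
    have hA : (∑ j1 ∈ range (r + 2), ∑ j1' ∈ range (s + 1),
          if j1 + j1' = t then
            RatFunc.X ^ (j1 * (s - j1')) * gauss r j1 * gauss s j1' else 0) = G r s t := by
      rw [Finset.sum_range_succ]
      have : (∑ j1' ∈ range (s + 1),
          if r + 1 + j1' = t then
            RatFunc.X ^ ((r + 1) * (s - j1')) * gauss r (r + 1) * gauss s j1' else 0) = 0 := by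
        apply Finset.sum_eq_zero
        intro j1' _
        rw [gauss_of_gt (Nat.lt_succ_self r)]
        split_ifs <;> simp
      rw [this, add_zero]; rfl
    rw [expand, hA, ih t]
    have hB0 : (∑ j1' ∈ range (s + 1),
        if 0 + j1' = t then
          RatFunc.X ^ (0 * (s - j1')) * pasc r 0 * gauss s j1' else 0) = 0 := by
      apply Finset.sum_eq_zero
      intro j1' _
      simp [pasc]
    rw [Finset.sum_range_succ' _ (r + 1), hB0, add_zero]
    cases t with
    | zero =>
      have : (∑ i ∈ range (r + 1), ∑ j1' ∈ range (s + 1),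
          if i + 1 + j1' = 0 then
            RatFunc.X ^ ((i + 1) * (s - j1')) * pasc r (i + 1) * gauss s j1' else 0) = 0 := by
        apply Finset.sum_eq_zero; intro i _
        apply Finset.sum_eq_zero; intro j1' _
        rw [if_neg (by omega)]
      rw [this, add_zero]
      simp
    | succ u =>
      have hBeq : (∑ i ∈ range (r + 1), ∑ j1' ∈ range (s + 1),
          if i + 1 + j1' = u + 1 then
            RatFunc.X ^ ((i + 1) * (s - j1')) * pasc r (i + 1) * gauss s j1' else 0)
          = RatFunc.X ^ (r + s - u) * G r s u := by
        unfold G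
        rw [Finset.mul_sum]
        refine Finset.sum_congr rfl fun i hi => ?_
        rw [Finset.mul_sum]
        refine Finset.sum_congr rfl fun j1' hj1' => ?_
        have hi' : i ≤ r := Nat.lt_succ_iff.mp (Finset.mem_range.mp hi)
        have hj' : j1' ≤ s := Nat.lt_succ_iff.mp (Finset.mem_range.mp hj1')
        by_cases h : i + j1' = u
        · rw [if_pos (by omega), if_pos h]
          have hexp : (i + 1) * (s - j1') + (r - i) = (r + s - u) + i * (s - j1') := by
            have h1 : (i + 1) * (s - j1') = i * (s - j1') + (s - j1') := by ring
            generalize i * (s - j1') = c at *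
            omega
          show RatFunc.X ^ ((i + 1) * (s - j1')) * (RatFunc.X ^ (r - i) * gauss r i)
              * gauss s j1' = _
          rw [← mul_assoc, ← pow_add, hexp, pow_add]
          ring
        · rw [if_neg (by omega), if_neg h, mul_zero]
      rw [hBeq, ih u, ← gauss_succ_succ (r + s) u]
      congr 1
      omega

lemma fq_key (r s t : ℕ) :
    qPoch RatFunc.X r * qPoch RatFunc.X s * fq r s t = gauss (r + s) t := by
  rw [← G_eq r s t]
  unfold fq G
  rw [Finset.mul_sum]
  refine Finset.sum_congr rfl fun j1 hj1 => ?_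
  rw [Finset.mul_sum]
  refine Finset.sum_congr rfl fun j1' hj1' => ?_
  have hj1r : j1 ≤ r := Nat.lt_succ_iff.mp (Finset.mem_range.mp hj1)
  have hj1s : j1' ≤ s := Nat.lt_succ_iff.mp (Finset.mem_range.mp hj1')
  split_ifs with h
  · rw [gauss, gauss, if_pos hj1r, if_pos hj1s]
    field_simp [qPoch_ne_zero]
  · rw [mul_zero]

theorem fq_rel (r s t : ℕ) (hr : 1 ≤ r) (hs : 1 ≤ s) :
    (1 - (RatFunc.X : RatFunc ℚ) ^ s) * fq (r - 1) s t
      = (1 - (RatFunc.X : RatFunc ℚ) ^ r) * fq (s - 1) r t := by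
  obtain ⟨r', rfl⟩ : ∃ r', r = r' + 1 := ⟨r - 1, by omega⟩
  obtain ⟨s', rfl⟩ : ∃ s', s = s' + 1 := ⟨s - 1, by omega⟩
  simp only [Nat.add_sub_cancel]
  apply mul_left_cancel₀ (mul_ne_zero (qPoch_ne_zero r') (qPoch_ne_zero s'))
  have e1 : qPoch RatFunc.X r' * qPoch RatFunc.X s' *
      ((1 - (RatFunc.X : RatFunc ℚ) ^ (s' + 1)) * fq r' (s' + 1) t)
      = gauss (r' + (s' + 1)) t := by
    rw [← fq_key r' (s' + 1) t, qPoch_succ s']; ring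
  have e2 : qPoch RatFunc.X r' * qPoch RatFunc.X s' *
      ((1 - (RatFunc.X : RatFunc ℚ) ^ (r' + 1)) * fq s' (r' + 1) t)
      = gauss (s' + (r' + 1)) t := by
    rw [← fq_key s' (r' + 1) t, qPoch_succ r']; ring
  rw [e1, e2]
  congr 1
  omega
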